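/- The second derivative ξ''(t) is strictly positive for all t ∈ (−π/2, π/2), where ξ(t) = (cos²t + 2t·sin t·cos t + t² − π²/4)/cos²t; in particular ξ' is strictly increasing on (−π/2, π/2). -/

import Mathlib

open Real Set

noncomputable def xi (t : ℝ) : ℝ :=
  (Real.cos t ^ 2 + 2 * t * Real.sin t * Real.cos t + t ^ 2 - Real.pi ^ 2 / 4) / Real.cos t ^ 2

noncomputable def xiN (t : ℝ) : ℝ :=
  Real.cos t ^ 2 + 2 * t * Real.sin t * Real.cos t + t ^ 2 - Real.pi ^ 2 / 4

noncomputable def xi1 (t : ℝ) : ℝ := 4 * t + 2 * Real.sin t * xiN t / Real.cos t ^ 3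

noncomputable def xi2 (t : ℝ) : ℝ :=
  4 + 8 * t * Real.sin t / Real.cos t + 2 * xiN t / Real.cos t ^ 2
    + 6 * Real.sin t ^ 2 * xiN t / Real.cos t ^ 4

noncomputable def Phi (t : ℝ) : ℝ :=
  3 * Real.cos t ^ 2 + 6 * t * Real.sin t * Real.cos t
    + (t ^ 2 - Real.pi ^ 2 / 4) * (1 + 2 * Real.sin t ^ 2)

lemma hasDerivAt_xiN (t : ℝ) : HasDerivAt xiN (4 * t * Real.cos t ^ 2) t := by
  have h1 := (Real.hasDerivAt_cos t).pow 2
  have h2 := (((hasDerivAt_id t).const_mul (2:ℝ)).mul (Real.hasDerivAt_sin t)).mul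
    (Real.hasDerivAt_cos t)
  have h3 := hasDerivAt_pow 2 t
  have h := ((h1.add h2).add h3).sub_const (Real.pi ^ 2 / 4)
  simp only [id_eq] at h
  refine h.congr_deriv (Eq.symm ?_)
  simp only [Pi.mul_apply, Pi.pow_apply]
  linear_combination (2*t) * Real.sin_sq_add_cos_sq t

lemma hasDerivAt_xi {t : ℝ} (hc : Real.cos t ≠ 0) : HasDerivAt xi (xi1 t) t := by
  have hd := (hasDerivAt_xiN t).div ((Real.hasDerivAt_cos t).pow 2)
    (pow_ne_zero 2 hc)
  refine hd.congr_deriv (Eq.symm ?_)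
  simp only [Pi.mul_apply, Pi.pow_apply]
  simp only [xi1]
  field_simp
  ring

lemma hasDerivAt_xi1 {t : ℝ} (hc : Real.cos t ≠ 0) : HasDerivAt xi1 (xi2 t) t := by
  have hd := ((hasDerivAt_id t).const_mul (4:ℝ)).add
    ((((Real.hasDerivAt_sin t).const_mul (2:ℝ)).mul (hasDerivAt_xiN t)).div
      ((Real.hasDerivAt_cos t).pow 3) (pow_ne_zero 3 hc))
  simp only [id_eq] at hd
  refine hd.congr_deriv (Eq.symm ?_)
  simp only [Pi.mul_apply, Pi.pow_apply]
  simp only [xi2]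
  field_simp
  ring

lemma hasDerivAt_Phi (t : ℝ) :
    HasDerivAt Phi (Real.cos t * (8 * t * Real.cos t
      - (Real.pi ^ 2 - 4 * t ^ 2) * Real.sin t)) t := by
  have h1 := ((Real.hasDerivAt_cos t).pow 2).const_mul (3:ℝ)
  have h2 := ((((hasDerivAt_id t).const_mul (6:ℝ)).mul (Real.hasDerivAt_sin t)).mul
    (Real.hasDerivAt_cos t))
  have h3 := ((hasDerivAt_pow 2 t).sub_const (Real.pi ^ 2 / 4)).mul
    ((((Real.hasDerivAt_sin t).pow 2).const_mul (2:ℝ)).const_add 1)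
  have h := (h1.add h2).add h3
  simp only [id_eq] at h
  refine h.congr_deriv (Eq.symm ?_)
  simp only [Pi.mul_apply, Pi.pow_apply]
  linear_combination (2*t) * Real.sin_sq_add_cos_sq t

set_option maxHeartbeats 1000000 in
lemma B_neg {x : ℝ} (hx0 : 0 < x) (hx1 : x < Real.pi / 2) :
    8 * x * Real.cos x - (Real.pi ^ 2 - 4 * x ^ 2) * Real.sin x < 0 := by
  have hpi1 : (3.141592 : ℝ) < Real.pi := Real.pi_gt_d6
  have hpi2 : Real.pi < 3.15 := Real.pi_lt_d2
  have hpl : (9.8696 : ℝ) < Real.pi ^ 2 := by nlinarith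
  have hpu : Real.pi ^ 2 < 9.9226 := by nlinarith
  rcases le_or_gt x (3/4) with hx | hx
  · -- small x : use sin x > x - x^3/4 and cos x = 1 - 2 sin(x/2)^2
    have hsin : x - x^3/4 < Real.sin x := by
      have := Real.sin_gt_sub_cube hx0; nlinarith [pow_pos hx0 3]
    have hs2 : x/2 - (x/2)^3/4 < Real.sin (x/2) := by
      have := Real.sin_gt_sub_cube (by linarith : 0 < x/2)
      nlinarith [pow_pos (by linarith : (0:ℝ) < x/2) 3]
    have hcos : Real.cos x = 1 - 2 * Real.sin (x/2) ^ 2 := by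
      have h := Real.sin_sq_eq_half_sub (x/2)
      have h2 : 2 * (x/2) = x := by ring
      rw [h2] at h
      linarith
    have hx2 : x ^ 2 ≤ 9/16 := by nlinarith
    have hlb : 0 < x/2 - (x/2)^3/4 := by nlinarith [mul_pos (mul_pos hx0 hx0) hx0]
    have hb2 : (x/2 - (x/2)^3/4)^2 ≤ Real.sin (x/2) ^ 2 :=
      pow_le_pow_left₀ hlb.le hs2.le 2
    have hq : 0 < Real.pi ^ 2 - 4 * x ^ 2 := by nlinarith
    have hA : (Real.pi ^ 2 - 4 * x ^ 2) * (x - x^3/4) < (Real.pi ^ 2 - 4 * x ^ 2) * Real.sin x :=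
      (mul_lt_mul_iff_right₀ hq).2 hsin
    have hB : 8 * x * Real.cos x ≤ 8*x - 16*x*(x/2 - (x/2)^3/4)^2 := by
      rw [hcos]
      nlinarith [mul_nonneg hx0.le (sub_nonneg.2 hb2)]
    have e0 : 0 ≤ Real.pi ^ 2 - 8 - Real.pi ^ 2 / 4 * x ^ 2 := by
      have := mul_le_mul_of_nonneg_left hx2 (by positivity : (0:ℝ) ≤ Real.pi ^ 2 / 4)
      linarith
    have hpoly : 8*x - 16*x*(x/2 - (x/2)^3/4)^2 ≤ (Real.pi ^ 2 - 4 * x ^ 2) * (x - x^3/4) := by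
      nlinarith [mul_nonneg hx0.le e0, pow_pos hx0 5, pow_pos hx0 7]
    linarith
  · -- large x : substitute y = π/2 - x
    obtain ⟨y, hxy, hy0, hyb⟩ : ∃ y, x = Real.pi/2 - y ∧ 0 < y ∧ y ≤ Real.pi/2 - 3/4 :=
      ⟨Real.pi/2 - x, by ring, by linarith, by linarith⟩
    subst hxy
    have hcx : Real.cos (Real.pi/2 - y) = Real.sin y := Real.cos_pi_div_two_sub y
    have hsx : Real.sin (Real.pi/2 - y) = Real.cos y := Real.sin_pi_div_two_sub y
    have hsy : Real.sin y < y := Real.sin_lt hy0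
    have hcy : 1 - y ^ 2 / 2 ≤ Real.cos y := Real.one_sub_sq_div_two_le_cos
    have hq : 0 < Real.pi ^ 2 - 4 * (Real.pi/2 - y) ^ 2 := by nlinarith
    have hq2 : 0 < 2 - Real.pi * y + y ^ 2 := by
      have h1 : 0 ≤ (Real.pi/2 - 3/4 - y) := by linarith
      have h2 : 0 ≤ (Real.pi/2 + 3/4 - y) := by linarith
      have h3 : 0 ≤ (Real.pi/2 - 3/4 - y) * (Real.pi/2 + 3/4 - y) := mul_nonneg h1 h2
      have h4 : (Real.pi/2 - 3/4 - y) * (Real.pi/2 + 3/4 - y)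
          = Real.pi^2/4 - 9/16 - Real.pi*y + y^2 := by ring
      rw [h4] at h3
      linarith
    have key : 8 * (Real.pi/2 - y) * y
        - (Real.pi ^ 2 - 4 * (Real.pi/2 - y) ^ 2) * (1 - y ^ 2 / 2) ≤ 0 := by
      have e : 8 * (Real.pi/2 - y) * y
          - (Real.pi ^ 2 - 4 * (Real.pi/2 - y) ^ 2) * (1 - y ^ 2 / 2)
          = -2 * (y^2 * (2 - Real.pi*y + y^2)) := by ring
      rw [e]
      have := mul_nonneg (sq_nonneg y) hq2.le
      linarith
    have hA : 8 * (Real.pi/2 - y) * Real.sin y < 8 * (Real.pi/2 - y) * y :=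
      (mul_lt_mul_iff_right₀ (by linarith : (0:ℝ) < 8 * (Real.pi/2 - y))).2 hsy
    have hB : (Real.pi ^ 2 - 4 * (Real.pi/2 - y) ^ 2) * (1 - y ^ 2 / 2)
        ≤ (Real.pi ^ 2 - 4 * (Real.pi/2 - y) ^ 2) * Real.cos y :=
      (mul_le_mul_iff_right₀ hq).2 hcy
    rw [hcx, hsx]
    linarith

lemma Phi_pos {t : ℝ} (ht : t ∈ Ioo (-(Real.pi / 2)) (Real.pi / 2)) : 0 < Phi t := by
  obtain ⟨ht1, ht2⟩ := ht
  -- Phi is even, so reduce to t ∈ [0, π/2)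
  have heven : ∀ s : ℝ, Phi (-s) = Phi s := by
    intro s; simp only [Phi, Real.cos_neg, Real.sin_neg, neg_neg]; ring
  have key : ∀ s : ℝ, 0 ≤ s → s < Real.pi / 2 → 0 < Phi s := by
    intro s hs0 hs2
    have hanti : StrictAntiOn Phi (Icc 0 (Real.pi / 2)) := by
      apply strictAntiOn_of_deriv_neg (convex_Icc _ _)
      · exact fun u _ => (hasDerivAt_Phi u).differentiableAt.continuousAt.continuousWithinAt
      · intro u hu
        rw [interior_Icc] at hu
        rw [(hasDerivAt_Phi u).deriv]
        have hcu : 0 < Real.cos u :=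
          Real.cos_pos_of_mem_Ioo ⟨by linarith [hu.1, Real.pi_pos], hu.2⟩
        exact mul_neg_of_pos_of_neg hcu (B_neg hu.1 hu.2)
    have hPend : Phi (Real.pi / 2) = 0 := by
      simp only [Phi, Real.cos_pi_div_two, Real.sin_pi_div_two]
      ring
    have := hanti ⟨hs0, hs2.le⟩ ⟨by linarith [Real.pi_pos], le_refl _⟩ hs2
    rw [hPend] at this
    exact this
  rcases le_or_gt 0 t with h | h
  · exact key t h ht2
  · rw [← heven t]; exact key (-t) (by linarith) (by linarith)

theorem stmt_10 :
    (∀ t ∈ Ioo (-(π / 2)) (π / 2), 0 < deriv (deriv xi) t) ∧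
    StrictMonoOn (deriv xi) (Ioo (-(π / 2)) (π / 2)) := by
  have hcpos : ∀ t ∈ Ioo (-(π / 2)) (π / 2), 0 < Real.cos t := fun t ht =>
    Real.cos_pos_of_mem_Ioo ht
  have hderiv1 : ∀ t ∈ Ioo (-(π / 2)) (π / 2), deriv xi t = xi1 t := fun t ht =>
    (hasDerivAt_xi (hcpos t ht).ne').deriv
  have hderiv2 : ∀ t ∈ Ioo (-(π / 2)) (π / 2), deriv (deriv xi) t = xi2 t := by
    intro t ht
    have hc := (hcpos t ht).ne'
    have hev : ∀ᶠ x in nhds t, Real.cos x ≠ 0 :=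
      Real.continuous_cos.continuousAt.eventually_ne hc
    have hev' : deriv xi =ᶠ[nhds t] xi1 := hev.mono fun x hx => (hasDerivAt_xi hx).deriv
    rw [hev'.deriv_eq]
    exact (hasDerivAt_xi1 hc).deriv
  have hpos : ∀ t ∈ Ioo (-(π / 2)) (π / 2), 0 < deriv (deriv xi) t := by
    intro t ht
    rw [hderiv2 t ht]
    have hc := hcpos t ht
    have hΦ := Phi_pos ht
    have hnum : 4*Real.cos t^4 + 8*t*Real.sin t*Real.cos t^3 + 2*xiN t*Real.cos t^2
        + 6*Real.sin t^2*xiN t = 2 * Phi t := by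
      simp only [xiN, Phi]
      linear_combination (6*Real.cos t^2 + 12*t*Real.sin t*Real.cos t + 2*t^2
        - Real.pi^2/2) * Real.sin_sq_add_cos_sq t
    have hrep : xi2 t = (4*Real.cos t^4 + 8*t*Real.sin t*Real.cos t^3
        + 2*xiN t*Real.cos t^2 + 6*Real.sin t^2*xiN t)/Real.cos t^4 := by
      simp only [xi2]; field_simp
    rw [hrep, hnum]
    positivity
  refine ⟨hpos, ?_⟩
  apply strictMonoOn_of_deriv_pos (convex_Ioo _ _)
  · apply ContinuousOn.congr (f := xi1)
    · exact fun t ht =>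
        (hasDerivAt_xi1 (hcpos t ht).ne').differentiableAt.continuousAt.continuousWithinAt
    · exact fun t ht => hderiv1 t ht
  · intro t ht
    rw [interior_Ioo] at ht
    exact hpos t ht
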